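/- For the zigzag Dyck path Z_{n+1} = (NE)^{n+1} of size n+1, the number of billiard trajectories in the grid polygon enclosed by Z_{n+1} and the reflection of L_{n+1} = N^{n+1}E^{n+1} equals 1 + ⌊n/2⌋. -/

import Mathlib

/-- A Dyck path of size `n`: a list of booleans (`true` = north step, `false` = east step)
from `(0,0)` to `(n,n)` staying weakly above the diagonal `y = x`. -/
def IsDyckPath (n : ℕ) (w : List Bool) : Prop :=
  w.length = 2 * n ∧ w.count true = n ∧
    ∀ k, (w.take k).count false ≤ (w.take k).count true

/-- The `y`-coordinate of the lattice point reached after `k` steps. -/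
def ycoord (w : List Bool) (k : ℕ) : ℕ := (w.take k).count true

/-- The `x`-coordinate of the lattice point reached after `k` steps. -/
def xcoord (w : List Bool) (k : ℕ) : ℕ := (w.take k).count false

/-- A peak: a north step at position `i` followed by an east step. -/
def IsPeak (w : List Bool) (i : ℕ) : Prop := w[i]? = some true ∧ w[i+1]? = some false

/-- A valley: an east step at position `i` followed by a north step. -/
def IsValley (w : List Bool) (i : ℕ) : Prop := w[i]? = some false ∧ w[i+1]? = some true

/-- Height above the diagonal after `k` steps. -/
def pdepth (w : List Bool) (k : ℕ) : ℤ := (ycoord w k : ℤ) - (xcoord w k : ℤ)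

/-- Step `i` (a north step) of `w` is matched with step `j` (an east step):
the facing east step at the same height (balanced-parentheses matching). -/
def Matches (w : List Bool) (i j : ℕ) : Prop :=
  i < j ∧ w[i]? = some true ∧ w[j]? = some false ∧
    pdepth w (j + 1) = pdepth w i ∧ ∀ k, i < k → k ≤ j → pdepth w i < pdepth w k

/-- The graph on `m` points whose edges are the upper arches and the lower arches;
its connected components are the components of the corresponding meander. -/
def meanderGraph (m : ℕ) (upper lower : ℕ → ℕ → Prop) : SimpleGraph (Fin m) where
  Adj i j := i ≠ j ∧ (upper i.1 j.1 ∨ upper j.1 i.1 ∨ lower i.1 j.1 ∨ lower j.1 i.1)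
  symm := by
    constructor
    intro i j h
    exact ⟨h.1.symm, by tauto⟩
  loopless := by
    constructor
    intro i h
    exact h.1 rfl

/-- The number of components of the meander with the matching of `P` above and the
matching of `Q` below. -/
noncomputable def trajPQ (n : ℕ) (P Q : List Bool) : ℕ :=
  Nat.card (meanderGraph (2 * n) (Matches P) (Matches Q)).ConnectedComponent

/-- The number of components of the meander with the matching of `P` above and the
rainbow matching `i ↦ 2n - 1 - i` below. -/
noncomputable def traj (n : ℕ) (P : List Bool) : ℕ :=
  Nat.card (meanderGraph (2 * n) (Matches P)
    (fun i j => i + j + 1 = 2 * n)).ConnectedComponent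

/-- No peak with even `y`-coordinate and no valley with odd `x`-coordinate. -/
def NoBadCorner (w : List Bool) : Prop :=
  (∀ i, IsPeak w i → Odd (ycoord w (i + 1))) ∧
  (∀ i, IsValley w i → Even (xcoord w (i + 1)))

/-- A bad corner: a peak with even `y`-coordinate or a valley with odd `x`-coordinate. -/
def IsBadCorner (w : List Bool) (i : ℕ) : Prop :=
  (IsPeak w i ∧ Even (ycoord w (i + 1))) ∨ (IsValley w i ∧ Odd (xcoord w (i + 1)))

/-- Interchange the two steps of the corner at positions `i`, `i+1`. -/
def swapCorner (w : List Bool) (i : ℕ) : List Bool :=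
  (w.set i (w.getD (i + 1) true)).set (i + 1) (w.getD i true)

open Classical in
/-- The involution `φ`: swap the two steps of the first bad corner, if any. -/
noncomputable def phiMap (w : List Bool) : List Bool :=
  if h : ∃ i, IsBadCorner w i then swapCorner w (Nat.find h) else w

/-- The number of unit squares between a Dyck path and the diagonal `y = x`. -/
def area (w : List Bool) : ℕ :=
  ((List.range w.length).map fun i =>
    if w.getD i true then 0 else ycoord w i - xcoord w i - 1).sum

/-- The zigzag Dyck path `(NE)^m`. -/
def zigzag (m : ℕ) : List Bool := (List.replicate m [true, false]).flatten

/-- `N^{2a_1} E^{2b_1} ⋯ N^{2a_t} E^{2b_t}` for `ab = [(a_1,b_1),…,(a_t,b_t)]`. -/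
def doubledWord (ab : List (ℕ × ℕ)) : List Bool :=
  (ab.map fun p => List.replicate (2 * p.1) true ++ List.replicate (2 * p.2) false).flatten

/-- `N^{a_1} E^{b_1} ⋯ N^{a_t} E^{b_t}` for `ab = [(a_1,b_1),…,(a_t,b_t)]`. -/
def halfWord (ab : List (ℕ × ℕ)) : List Bool :=
  (ab.map fun p => List.replicate p.1 true ++ List.replicate p.2 false).flatten

/-- All peaks at odd height (`height` = `y - x` at the peak's lattice point). -/
def AllPeaksOdd (w : List Bool) : Prop :=
  ∀ i, IsPeak w i → Odd (ycoord w (i + 1) - xcoord w (i + 1))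

/-- All peaks at even height. -/
def AllPeaksEven (w : List Bool) : Prop :=
  ∀ i, IsPeak w i → Even (ycoord w (i + 1) - xcoord w (i + 1))

/-- Steps of a Motzkin path: up, horizontal, down. -/
inductive MStep | U | H | D
deriving DecidableEq

/-- The total height change along a list of Motzkin steps. -/
def msum (l : List MStep) : ℤ :=
  (l.map fun s => match s with | MStep.U => 1 | MStep.H => 0 | MStep.D => -1).sum

/-- A Motzkin path of length `n`. -/
def IsMotzkin (n : ℕ) (l : List MStep) : Prop :=
  l.length = n ∧ msum l = 0 ∧ ∀ k, 0 ≤ msum (l.take k)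

/-- A Riordan path of length `n`: a Motzkin path with no horizontal step on the `x`-axis. -/
def IsRiordan (n : ℕ) (l : List MStep) : Prop :=
  IsMotzkin n l ∧ ∀ i, l[i]? = some MStep.H → msum (l.take i) ≠ 0

/-- The map `φ_A` from Dyck paths of size `n+1` (all peaks at odd height)
to Motzkin paths of length `n`: `v_j` is read off from steps `p_{2j} p_{2j+1}`. -/
def phiA (n : ℕ) (P : List Bool) : List MStep :=
  (List.range n).map fun j =>
    match P.getD (2 * j + 1) true, P.getD (2 * j + 2) true with
    | true, true => MStep.U
    | false, true => MStep.H
    | _, _ => MStep.D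

/-- The map `φ_B` from Dyck paths of size `n` (all peaks at even height)
to Riordan paths of length `n`: `u_j` is read off from steps `p_{2j-1} p_{2j}`. -/
def phiB (n : ℕ) (P : List Bool) : List MStep :=
  (List.range n).map fun j =>
    match P.getD (2 * j) true, P.getD (2 * j + 1) true with
    | true, true => MStep.U
    | false, true => MStep.H
    | _, _ => MStep.D

/-!
The zigzag matches step `2a` with step `2a + 1`, and the rainbow matches step `i` with step
`2m - 1 - i`, so on blocks `{2a, 2a + 1}` of two consecutive steps it induces the reflection
`a ↦ m - 1 - a`. Hence the components of the meander are the orbits of this reflection on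
`{0, …, m - 1}`, of which there are `⌈m/2⌉`; for `m = n + 1` this is `1 + ⌊n/2⌋`.
-/

namespace SimpleGraph

theorem card_connectedComponent_eq_of_rightInverse {V W : Type*} (G : SimpleGraph V)
    (f : V → W) (s : W → V) (hfs : Function.RightInverse s f)
    (hadj : ∀ u v, G.Adj u v → f u = f v) (hreach : ∀ v, G.Reachable v (s (f v))) :
    Nat.card G.ConnectedComponent = Nat.card W := by
  have hf : ∀ u v, G.Reachable u v → f u = f v := by
    intro u v h
    rw [reachable_iff_reflTransGen] at h
    induction h with
    | refl => rfl
    | tail _ huv ih => exact ih.trans (hadj _ _ huv)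
  refine Nat.card_eq_of_bijective (ConnectedComponent.lift f fun u v p _ => hf u v p.reachable)
    ⟨fun c d hcd => ?_, fun w => ⟨G.connectedComponentMk (s w), hfs w⟩⟩
  obtain ⟨u, rfl⟩ := c.exists_rep
  obtain ⟨v, rfl⟩ := d.exists_rep
  refine ConnectedComponent.sound ((hreach u).trans ?_)
  rw [show f u = f v from hcd]
  exact (hreach v).symm

end SimpleGraph

lemma zigzag_succ (m : ℕ) : zigzag (m + 1) = true :: false :: zigzag m := by
  simp [zigzag, List.replicate_succ]

lemma getElem?_zigzag (m i : ℕ) :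
    (zigzag m)[i]? = if i < 2 * m then some (decide (i % 2 = 0)) else none := by
  induction m generalizing i with
  | zero => simp [zigzag]
  | succ m ih =>
    rw [zigzag_succ]
    match i with
    | 0 => simp
    | 1 => simp; omega
    | k + 2 =>
      simp only [List.getElem?_cons_succ, ih k]
      split <;> split
      all_goals first | rfl | omega | (simp only [Option.some.injEq, decide_eq_decide]; omega)

lemma ycoord_zigzag (m k : ℕ) : ycoord (zigzag m) k = min ((k + 1) / 2) m := by
  induction m generalizing k with
  | zero => simp [zigzag, ycoord]
  | succ m ih =>
    rw [zigzag_succ]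
    match k with
    | 0 | 1 => simp [ycoord]
    | k + 2 =>
      have := ih k
      unfold ycoord at this ⊢
      simp [List.take_succ_cons, this]
      omega

lemma xcoord_zigzag (m k : ℕ) : xcoord (zigzag m) k = min (k / 2) m := by
  induction m generalizing k with
  | zero => simp [zigzag, xcoord]
  | succ m ih =>
    rw [zigzag_succ]
    match k with
    | 0 | 1 => simp [xcoord]
    | k + 2 =>
      have := ih k
      unfold xcoord at this ⊢
      simp [List.take_succ_cons, this]

lemma pdepth_zigzag (m k : ℕ) : pdepth (zigzag m) k = (min k (2 * m) % 2 : ℕ) := by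
  rw [pdepth, ycoord_zigzag, xcoord_zigzag]
  omega

lemma matches_zigzag_iff (m i j : ℕ) :
    Matches (zigzag m) i j ↔ i % 2 = 0 ∧ j = i + 1 ∧ j < 2 * m := by
  simp only [Matches, getElem?_zigzag, pdepth_zigzag]
  constructor
  · rintro ⟨hij, hi, hj, -, hmin⟩
    split at hi <;> split at hj <;> simp_all
    by_contra hne
    have := hmin (i + 2) (by omega) (by omega)
    omega
  · rintro ⟨hi, rfl, hj⟩
    refine ⟨by omega, ?_, ?_, by omega, fun k hk hk' => ?_⟩
    · rw [if_pos (by omega)]; simpa using hi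
    · rw [if_pos hj]; simp; omega
    · obtain rfl : k = i + 1 := by omega
      omega

abbrev zigzagRainbow (m : ℕ) : SimpleGraph (Fin (2 * m)) :=
  meanderGraph (2 * m) (Matches (zigzag m)) (fun i j => i + j + 1 = 2 * m)

/-- The representative `min a (m - 1 - a)` of the rainbow orbit of the block `a = i / 2`
of step `i`. -/
def foldedBlock (m i : ℕ) : ℕ := min (i / 2) (m - 1 - i / 2)

section zigzagRainbow

open SimpleGraph

variable {m : ℕ}

lemma zigzagRainbow_adj_iff (i j : Fin (2 * m)) :
    (zigzagRainbow m).Adj i j ↔ i ≠ j ∧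
      ((i.1 % 2 = 0 ∧ j.1 = i.1 + 1) ∨ (j.1 % 2 = 0 ∧ i.1 = j.1 + 1) ∨ i.1 + j.1 + 1 = 2 * m) := by
  have := i.2
  have := j.2
  simp only [zigzagRainbow, meanderGraph, matches_zigzag_iff]
  constructor
  · rintro ⟨hne, h | h | h | h⟩ <;> refine ⟨hne, by omega⟩
  · rintro ⟨hne, h | h | h⟩ <;> refine ⟨hne, by omega⟩

lemma foldedBlock_eq_of_adj {i j : Fin (2 * m)} (h : (zigzagRainbow m).Adj i j) :
    foldedBlock m i = foldedBlock m j := by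
  rw [zigzagRainbow_adj_iff] at h
  have := i.2
  have := j.2
  unfold foldedBlock
  omega

lemma zigzagRainbow_reachable_of_div_two_eq {i j : Fin (2 * m)} (h : i.1 / 2 = j.1 / 2) :
    (zigzagRainbow m).Reachable i j := by
  by_cases hij : i = j
  · exact hij ▸ Reachable.refl i
  · refine Adj.reachable ((zigzagRainbow_adj_iff i j).2 ⟨hij, ?_⟩)
    have : i.1 ≠ j.1 := Fin.val_ne_of_ne hij
    omega

lemma zigzagRainbow_reachable_two_mul_foldedBlock (i : Fin (2 * m)) :
    (zigzagRainbow m).Reachable i ⟨2 * foldedBlock m i, by unfold foldedBlock; omega⟩ := by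
  have hi := i.2
  rcases min_choice (i.1 / 2) (m - 1 - i.1 / 2) with h | h
  · exact zigzagRainbow_reachable_of_div_two_eq (by simp [foldedBlock, h])
  · let i' : Fin (2 * m) := ⟨2 * m - 1 - i, by omega⟩
    have hadj : (zigzagRainbow m).Adj i i' := by
      rw [zigzagRainbow_adj_iff]
      exact ⟨Fin.ne_of_val_ne (by simp only [i']; omega), by simp only [i']; omega⟩
    refine hadj.reachable.trans (zigzagRainbow_reachable_of_div_two_eq ?_)
    simp only [foldedBlock, h, i']
    omega

theorem card_connectedComponent_zigzagRainbow :
    Nat.card (zigzagRainbow m).ConnectedComponent = (m + 1) / 2 := by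
  let f (i : Fin (2 * m)) : Fin ((m + 1) / 2) := ⟨foldedBlock m i, by unfold foldedBlock; omega⟩
  let s (k : Fin ((m + 1) / 2)) : Fin (2 * m) := ⟨2 * k, by omega⟩
  have hfs : Function.RightInverse s f := fun k => by
    ext
    simp only [f, s, foldedBlock]
    omega
  rw [(zigzagRainbow m).card_connectedComponent_eq_of_rightInverse f s hfs
    (fun _ _ h => Fin.ext (foldedBlock_eq_of_adj h))
    zigzagRainbow_reachable_two_mul_foldedBlock, Nat.card_eq_fintype_card, Fintype.card_fin]

end zigzagRainbow

/-- For the zigzag Dyck path `Z_{n+1} = (NE)^{n+1}`, the number of billiard trajectories in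
the grid polygon of `(Z_{n+1}, L_{n+1})` equals `1 + ⌊n/2⌋`. -/
theorem traj_zigzag (n : ℕ) : traj (n + 1) (zigzag (n + 1)) = 1 + n / 2 := by
  rw [traj, card_connectedComponent_zigzagRainbow]
  omega
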